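/- arXiv:2305.07006 — 3 statements merged into one kernel-verified Lean document; each statement's English description precedes it below -/
import Mathlib

section
/- Let Z = {(S_q, γ_q)}_{q∈[Q]} be a buyer-optimal signaling scheme. Then for every price p ∈ {v₁,…,vₙ} with p·G_𝒟(p) = R^My and every q ∈ [Q] with γ_q > 0, the price p is optimal for the signal S_q: p·G_{S_q}(p) = max_{v ∈ {v₁,…,vₙ}} v·G_{S_q}(v). -/
open Finset MeasureTheory

namespace PD

noncomputable section

/-- Complementary CDF of a mass function `fS` at value `v i`. -/
def G {n : ℕ} (v fS : Fin n → ℝ) (i : Fin n) : ℝ :=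
  ∑ j ∈ Finset.univ.filter (fun j => v i ≤ v j), fS j

/-- A signal is a probability mass function on the values. -/
def IsSignal {n : ℕ} (fS : Fin n → ℝ) : Prop :=
  (∀ i, 0 ≤ fS i) ∧ ∑ i, fS i = 1

/-- The index of the seller's price: the smallest index maximizing `v i * G i`. -/
def priceIdx {n : ℕ} [NeZero n] (v fS : Fin n → ℝ) : Fin n :=
  (Finset.univ.filter (fun i => ∀ j, v j * G v fS j ≤ v i * G v fS i)).min' (by
    haveI : Nonempty (Fin n) := ⟨⟨0, Nat.pos_of_ne_zero (NeZero.ne n)⟩⟩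
    obtain ⟨b, _, hb⟩ := Finset.exists_max_image (Finset.univ : Finset (Fin n))
      (fun i => v i * G v fS i) Finset.univ_nonempty
    exact ⟨b, Finset.mem_filter.mpr ⟨Finset.mem_univ _, fun j => hb j (Finset.mem_univ _)⟩⟩)

/-- Consumer surplus of value `v i` under signal `fS`. -/
def cs {n : ℕ} [NeZero n] (v fS : Fin n → ℝ) (i : Fin n) : ℝ :=
  if v (priceIdx v fS) ≤ v i then v i - v (priceIdx v fS) else 0

/-- Revenue of a signal: the maximum of `v i * G i`. -/
def revSig {n : ℕ} [NeZero n] (v fS : Fin n → ℝ) : ℝ :=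
  Finset.univ.sup' (by
    haveI : Nonempty (Fin n) := ⟨⟨0, Nat.pos_of_ne_zero (NeZero.ne n)⟩⟩
    exact Finset.univ_nonempty) (fun i => v i * G v fS i)

/-- A signaling scheme for prior mass function `f`. -/
structure Scheme (n : ℕ) (f : Fin n → ℝ) where
  Q : ℕ
  sig : Fin Q → Fin n → ℝ
  wt : Fin Q → ℝ
  sig_isSignal : ∀ q, IsSignal (sig q)
  wt_nonneg : ∀ q, 0 ≤ wt q
  wt_sum : ∑ q, wt q = 1
  bayes : ∀ i, ∑ q, wt q * sig q i = f i

/-- Expected consumer surplus of value `v i` under scheme `Z`. -/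
def csZ {n : ℕ} [NeZero n] (v f : Fin n → ℝ) (Z : Scheme n f) (i : Fin n) : ℝ :=
  ∑ q, cs v (Z.sig q) i * (Z.wt q * Z.sig q i / f i)

/-- Expected revenue of a scheme. -/
def revZ {n : ℕ} [NeZero n] (v : Fin n → ℝ) {f : Fin n → ℝ} (Z : Scheme n f) : ℝ :=
  ∑ q, Z.wt q * revSig v (Z.sig q)

/-- A scheme is efficient if on every positive-weight signal, the smallest value
in the support maximizes `v * G`. -/
def Efficient {n : ℕ} (v : Fin n → ℝ) {f : Fin n → ℝ} (Z : Scheme n f) : Prop :=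
  ∀ q, 0 < Z.wt q → ∀ i, (0 < Z.sig q i ∧ ∀ j, 0 < Z.sig q j → i ≤ j) →
    ∀ j, v j * G v (Z.sig q) j ≤ v i * G v (Z.sig q) i

/-- A scheme is monotone if higher values get (weakly) higher expected surplus. -/
def MonotoneScheme {n : ℕ} [NeZero n] (v f : Fin n → ℝ) (Z : Scheme n f) : Prop :=
  ∀ i j : Fin n, v i < v j → csZ v f Z i ≤ csZ v f Z j

/-- A scheme is buyer-optimal if the total expected consumer surplus equals the
expected value minus the Myerson revenue. -/
def BuyerOptimal {n : ℕ} [NeZero n] (v f : Fin n → ℝ) (Z : Scheme n f) : Prop :=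
  ∑ i, f i * csZ v f Z i = (∑ i, f i * v i) - revSig v f

/-- The surplus-mass step function of a scheme: equal to `csZ i` on the quantile
interval `(F(v_{i-1}), F(v_i)]`. -/
def smf {n : ℕ} [NeZero n] (v f : Fin n → ℝ) (Z : Scheme n f) (x : ℝ) : ℝ :=
  ∑ i, if (∑ j ∈ Finset.univ.filter (fun j => j < i), f j) < x ∧
          x ≤ ∑ j ∈ Finset.univ.filter (fun j => j ≤ i), f j
       then csZ v f Z i else 0

/-- Sorted `m`-prefix sum of `g` on `(0,1]`: the infimum of `∫_T g` over
(measurable) subsets `T` of `(0,1]` of total length `m`. -/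
def PF (g : ℝ → ℝ) (m : ℝ) : ℝ :=
  sInf { r : ℝ | ∃ T : Set ℝ, T ⊆ Set.Ioc 0 1 ∧ MeasurableSet T ∧
    volume T = ENNReal.ofReal m ∧ r = ∫ x in T, g x }

/-- Integration `m`-prefix sum of `g`: `∫₀^m g`. -/
def PFV (g : ℝ → ℝ) (m : ℝ) : ℝ := ∫ x in Set.Ioc (0:ℝ) m, g x

/-- A singleton signal puts all mass on one value. -/
def IsSingleton {n : ℕ} (fS : Fin n → ℝ) : Prop :=
  ∃ i : Fin n, fS = fun j => if j = i then 1 else 0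

/-- An equal-revenue binary signal on `v i < v j` puts mass `1 - v i / v j` on
`v i` and `v i / v j` on `v j`. -/
def IsEqRevBinary {n : ℕ} (v : Fin n → ℝ) (fS : Fin n → ℝ) : Prop :=
  ∃ i j : Fin n, v i < v j ∧
    fS = fun l => if l = i then 1 - v i / v j else if l = j then v i / v j else 0

/-- `i` is the smallest value in the support of `fS`. -/
def MinSupp {n : ℕ} (fS : Fin n → ℝ) (i : Fin n) : Prop :=
  0 < fS i ∧ ∀ j, 0 < fS j → i ≤ j

end

lemma priceIdx_max {n : ℕ} [NeZero n] (v fS : Fin n → ℝ) (j : Fin n) :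
    v j * G v fS j ≤ v (priceIdx v fS) * G v fS (priceIdx v fS) := by
  have h : priceIdx v fS ∈ Finset.univ.filter
      (fun i => ∀ j, v j * G v fS j ≤ v i * G v fS i) := Finset.min'_mem _ _
  exact (Finset.mem_filter.mp h).2 j

lemma revSig_eq {n : ℕ} [NeZero n] (v fS : Fin n → ℝ) :
    revSig v fS = v (priceIdx v fS) * G v fS (priceIdx v fS) := by
  refine le_antisymm (Finset.sup'_le _ _ fun j _ => priceIdx_max v fS j) ?_
  exact Finset.le_sup' (fun j => v j * G v fS j) (Finset.mem_univ _)

lemma surplus_le {n : ℕ} [NeZero n] (v fS : Fin n → ℝ) (hvpos : ∀ i, 0 < v i)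
    (hS : ∀ i, 0 ≤ fS i) :
    ∑ k, fS k * cs v fS k ≤ (∑ k, fS k * v k) - revSig v fS := by
  classical
  set p := priceIdx v fS with hp
  have h1 : ∑ k, fS k * cs v fS k
      = ∑ k ∈ Finset.univ.filter (fun k => v p ≤ v k), fS k * (v k - v p) := by
    rw [Finset.sum_filter]
    refine Finset.sum_congr rfl fun k _ => ?_
    unfold cs
    by_cases h : v p ≤ v k
    · rw [← hp]; simp [h]
    · rw [← hp]; simp [h]
  have h2 : ∑ k ∈ Finset.univ.filter (fun k => v p ≤ v k), fS k * (v k - v p)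
      = (∑ k ∈ Finset.univ.filter (fun k => v p ≤ v k), fS k * v k)
        - v p * G v fS p := by
    unfold G
    rw [Finset.mul_sum, ← Finset.sum_sub_distrib]
    refine Finset.sum_congr rfl fun k _ => by ring
  have h3 : (∑ k ∈ Finset.univ.filter (fun k => v p ≤ v k), fS k * v k)
      ≤ ∑ k, fS k * v k := by
    refine Finset.sum_le_sum_of_subset_of_nonneg (Finset.filter_subset _ _) ?_
    intro k _ _
    exact mul_nonneg (hS k) (hvpos k).le
  rw [h1, h2, revSig_eq, ← hp]
  linarith

theorem stmt15 (n : ℕ) [NeZero n] (v f : Fin n → ℝ)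
    (hv : StrictMono v) (hvpos : ∀ i, 0 < v i)
    (hf : ∀ i, 0 < f i) (hsum : ∑ i, f i = 1)
    (Z : Scheme n f) (hopt : BuyerOptimal v f Z)
    (i : Fin n) (hi : v i * G v f i = revSig v f)
    (q : Fin Z.Q) (hq : 0 < Z.wt q) :
    v i * G v (Z.sig q) i = revSig v (Z.sig q) := by
  classical
  -- G decomposes along the scheme
  have hG : ∀ k, G v f k = ∑ p, Z.wt p * G v (Z.sig p) k := by
    intro k
    unfold G
    calc ∑ j ∈ Finset.univ.filter (fun j => v k ≤ v j), f j
        = ∑ j ∈ Finset.univ.filter (fun j => v k ≤ v j), ∑ p, Z.wt p * Z.sig p j :=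
          Finset.sum_congr rfl fun j _ => (Z.bayes j).symm
      _ = ∑ p, ∑ j ∈ Finset.univ.filter (fun j => v k ≤ v j), Z.wt p * Z.sig p j :=
          Finset.sum_comm
      _ = ∑ p, Z.wt p * ∑ j ∈ Finset.univ.filter (fun j => v k ≤ v j), Z.sig p j :=
          Finset.sum_congr rfl fun p _ => (Finset.mul_sum _ _ _).symm
  have hle : ∀ p k, v k * G v (Z.sig p) k ≤ revSig v (Z.sig p) :=
    fun p k => Finset.le_sup' (fun j => v j * G v (Z.sig p) j) (Finset.mem_univ k)
  -- Myerson revenue expressed through signal i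
  have hRi : revSig v f = ∑ p, Z.wt p * (v i * G v (Z.sig p) i) := by
    rw [← hi, hG i, Finset.mul_sum]
    refine Finset.sum_congr rfl fun p _ => by ring
  have hge : revSig v f ≤ ∑ p, Z.wt p * revSig v (Z.sig p) := by
    rw [hRi]
    refine Finset.sum_le_sum fun p _ => ?_
    exact mul_le_mul_of_nonneg_left (hle p i) (Z.wt_nonneg p)
  -- total surplus rewritten
  have hcs : ∑ k, f k * csZ v f Z k
      = ∑ p, Z.wt p * ∑ k, Z.sig p k * cs v (Z.sig p) k := by
    have hterm : ∀ k, f k * csZ v f Z k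
        = ∑ p, Z.wt p * (Z.sig p k * cs v (Z.sig p) k) := by
      intro k
      unfold csZ
      rw [Finset.mul_sum]
      refine Finset.sum_congr rfl fun p _ => ?_
      have hk : f k ≠ 0 := (hf k).ne'
      field_simp
    calc ∑ k, f k * csZ v f Z k
        = ∑ k, ∑ p, Z.wt p * (Z.sig p k * cs v (Z.sig p) k) :=
          Finset.sum_congr rfl fun k _ => hterm k
      _ = ∑ p, ∑ k, Z.wt p * (Z.sig p k * cs v (Z.sig p) k) := Finset.sum_comm
      _ = ∑ p, Z.wt p * ∑ k, Z.sig p k * cs v (Z.sig p) k := by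
          refine Finset.sum_congr rfl fun p _ => ?_
          rw [Finset.mul_sum]
  -- total value decomposes
  have hval : ∑ k, f k * v k = ∑ p, Z.wt p * ∑ k, Z.sig p k * v k := by
    calc ∑ k, f k * v k
        = ∑ k, ∑ p, Z.wt p * (Z.sig p k * v k) := by
          refine Finset.sum_congr rfl fun k _ => ?_
          rw [← Z.bayes k, Finset.sum_mul]
          refine Finset.sum_congr rfl fun p _ => by ring
      _ = ∑ p, ∑ k, Z.wt p * (Z.sig p k * v k) := Finset.sum_comm
      _ = ∑ p, Z.wt p * ∑ k, Z.sig p k * v k := by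
          refine Finset.sum_congr rfl fun p _ => (Finset.mul_sum _ _ _).symm
  -- surplus upper bound per signal gives revenue upper bound
  have hle2 : ∑ p, Z.wt p * revSig v (Z.sig p) ≤ revSig v f := by
    have hsur : ∑ k, f k * csZ v f Z k
        ≤ (∑ k, f k * v k) - ∑ p, Z.wt p * revSig v (Z.sig p) := by
      rw [hcs, hval, ← Finset.sum_sub_distrib]
      refine Finset.sum_le_sum fun p _ => ?_
      rw [← mul_sub]
      refine mul_le_mul_of_nonneg_left ?_ (Z.wt_nonneg p)
      exact surplus_le v (Z.sig p) hvpos (Z.sig_isSignal p).1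
    have := hopt
    unfold BuyerOptimal at this
    linarith [this ▸ hsur]
  -- so weighted revenues coincide with weighted v_i-revenues
  have hkey : ∑ p, Z.wt p * (revSig v (Z.sig p) - v i * G v (Z.sig p) i) = 0 := by
    have : ∑ p, Z.wt p * revSig v (Z.sig p) = revSig v f := le_antisymm hle2 hge
    have h2 : ∑ p, Z.wt p * (revSig v (Z.sig p) - v i * G v (Z.sig p) i)
        = (∑ p, Z.wt p * revSig v (Z.sig p))
          - ∑ p, Z.wt p * (v i * G v (Z.sig p) i) := by
      rw [← Finset.sum_sub_distrib]
      refine Finset.sum_congr rfl fun p _ => by ring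
    rw [h2, this, ← hRi]
    ring
  have hnn : ∀ p ∈ Finset.univ,
      0 ≤ Z.wt p * (revSig v (Z.sig p) - v i * G v (Z.sig p) i) := by
    intro p _
    exact mul_nonneg (Z.wt_nonneg p) (by linarith [hle p i])
  have hz := (Finset.sum_eq_zero_iff_of_nonneg hnn).mp hkey q (Finset.mem_univ q)
  have := mul_eq_zero.mp hz
  rcases this with h | h
  · exact absurd h hq.ne'
  · linarith

end PD
end

section
/- For every signaling scheme Z there exists an efficient signaling scheme Z^E such that: (i) cs_{vᵢ}(Z^E) = cs_{vᵢ}(Z) for every i ∈ [n]; and (ii) Z^E has at most n signals (with positive weight), and any two distinct signals of Z^E have different smallest values in their supports. -/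
open Finset MeasureTheory

namespace PD

section Helpers

variable {n : ℕ}

private lemma G_eq_idx (v fS : Fin n → ℝ) (hv : StrictMono v) (i : Fin n) :
    G v fS i = ∑ j ∈ Finset.univ.filter (fun j => i ≤ j), fS j := by
  unfold G
  refine Finset.sum_congr ?_ fun _ _ => rfl
  ext j
  simp [hv.le_iff_le]

private lemma priceIdx_spec [NeZero n] (v fS : Fin n → ℝ) :
    ∀ j, v j * G v fS j ≤ v (priceIdx v fS) * G v fS (priceIdx v fS) := by
  have h : priceIdx v fS ∈ Finset.univ.filter
      (fun i => ∀ j, v j * G v fS j ≤ v i * G v fS i) := Finset.min'_mem _ _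
  exact fun j => (Finset.mem_filter.mp h).2 j

private lemma priceIdx_eq [NeZero n] (v fS : Fin n → ℝ) (m : Fin n)
    (hm : ∀ j, v j * G v fS j ≤ v m * G v fS m)
    (hlt : ∀ l, l < m → v l * G v fS l < v m * G v fS m) :
    priceIdx v fS = m := by
  have hmem : m ∈ Finset.univ.filter
      (fun i => ∀ j, v j * G v fS j ≤ v i * G v fS i) :=
    Finset.mem_filter.mpr ⟨Finset.mem_univ _, hm⟩
  refine le_antisymm (Finset.min'_le _ _ hmem) (Finset.le_min' _ _ _ ?_)
  intro y hy
  rw [Finset.mem_filter] at hy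
  by_contra hc
  push_neg at hc
  exact absurd (hy.2 m) (not_le.mpr (hlt y hc))

private lemma priceIdx_mass_pos [NeZero n] (v fS : Fin n → ℝ)
    (hv : StrictMono v) (hvpos : ∀ i, 0 < v i) (hS : IsSignal fS) :
    0 < fS (priceIdx v fS) := by
  obtain ⟨hnn, hsum1⟩ := hS
  set p := priceIdx v fS with hp
  have hspec := priceIdx_spec v fS
  have hex : ∃ i, 0 < fS i := by
    by_contra h
    push_neg at h
    have hz : ∀ i, fS i = 0 := fun i => le_antisymm (h i) (hnn i)
    simp [hz] at hsum1
  obtain ⟨i, hi⟩ := hex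
  have hGi : fS i ≤ G v fS i := by
    rw [G_eq_idx v fS hv]
    exact Finset.single_le_sum (fun j _ => hnn j)
      (Finset.mem_filter.mpr ⟨Finset.mem_univ _, le_refl i⟩)
  have hGp : 0 < G v fS p := by
    have h1 : 0 < v i * G v fS i := mul_pos (hvpos i) (lt_of_lt_of_le hi hGi)
    have h2 := hspec i
    nlinarith [hvpos p]
  by_contra hc
  have hc0 : fS p = 0 := le_antisymm (not_lt.mp hc) (hnn p)
  have hins : Finset.univ.filter (fun j => p ≤ j)
      = insert p (Finset.univ.filter (fun j => p < j)) := by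
    ext j
    simp only [Finset.mem_filter, Finset.mem_univ, true_and, Finset.mem_insert]
    constructor
    · intro h
      rcases eq_or_lt_of_le h with h | h
      · exact Or.inl h.symm
      · exact Or.inr h
    · rintro (rfl | h)
      · exact le_refl _
      · exact le_of_lt h
  have hGp' : G v fS p = ∑ j ∈ Finset.univ.filter (fun j => p < j), fS j := by
    rw [G_eq_idx v fS hv, hins, Finset.sum_insert (by simp), hc0, zero_add]
  obtain ⟨j0, hj0mem, _⟩ := Finset.exists_ne_zero_of_sum_ne_zero
    (by rw [← hGp']; exact hGp.ne')
  rw [Finset.mem_filter] at hj0mem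
  have hpj : p < j0 := hj0mem.2
  have hlt : (p : ℕ) + 1 < n := lt_of_le_of_lt (Nat.succ_le_of_lt hpj) j0.isLt
  set p' : Fin n := ⟨(p : ℕ) + 1, hlt⟩ with hp'
  have hfilter : Finset.univ.filter (fun j => p' ≤ j)
      = Finset.univ.filter (fun j => p < j) := by
    ext j
    simp only [Finset.mem_filter, Finset.mem_univ, true_and, Fin.le_def, Fin.lt_def, hp']
    omega
  have hGpp : G v fS p' = G v fS p := by
    rw [G_eq_idx v fS hv, hfilter, ← hGp']
  have hvp : v p < v p' := hv (by simp [Fin.lt_def, hp'])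
  exact absurd (hspec p')
    (not_le.mpr (by rw [hGpp]; exact mul_lt_mul_of_pos_right hvp hGp))

end Helpers

theorem stmt16 (n : ℕ) [NeZero n] (v f : Fin n → ℝ)
    (hv : StrictMono v) (hvpos : ∀ i, 0 < v i)
    (hf : ∀ i, 0 < f i) (hsum : ∑ i, f i = 1)
    (Z : Scheme n f) :
    ∃ ZE : Scheme n f, Efficient v ZE ∧
      (∀ i, csZ v f ZE i = csZ v f Z i) ∧
      (Finset.univ.filter (fun q => 0 < ZE.wt q)).card ≤ n ∧
      (∀ q q' : Fin ZE.Q, 0 < ZE.wt q → 0 < ZE.wt q' → q ≠ q' →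
        ∀ i, MinSupp (ZE.sig q) i → ¬ MinSupp (ZE.sig q') i) := by
  classical
  set k : Fin Z.Q → Fin n := fun q => priceIdx v (Z.sig q) with hkdef
  have hknn : ∀ q j, v j * G v (Z.sig q) j ≤ v (k q) * G v (Z.sig q) (k q) := by
    intro q
    simp only [hkdef]
    exact priceIdx_spec v (Z.sig q)
  have hkpos : ∀ q, 0 < Z.sig q (k q) := by
    intro q
    simp only [hkdef]
    exact priceIdx_mass_pos v _ hv hvpos (Z.sig_isSignal q)
  have hcsq : ∀ q i, cs v (Z.sig q) i = if v (k q) ≤ v i then v i - v (k q) else 0 := by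
    intro q i
    simp only [hkdef]
    rfl
  have hsnn : ∀ q i, 0 ≤ Z.sig q i := fun q => (Z.sig_isSignal q).1
  -- bucket decomposition: mass of value i in signal q goes to bucket min (k q) i
  set c : Fin Z.Q → Fin n → Fin n → ℝ :=
    fun q m i => if m = min (k q) i then Z.sig q i else 0 with hcdef
  have hcnn : ∀ q m i, 0 ≤ c q m i := by
    intro q m i
    simp only [hcdef]
    split
    · exact hsnn q i
    · exact le_refl 0
  have hcsum : ∀ q i, ∑ m, c q m i = Z.sig q i := by
    intro q i
    simp only [hcdef]
    rw [Finset.sum_ite_eq' Finset.univ (min (k q) i) (fun _ => Z.sig q i)]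
    simp
  have hczero : ∀ q m i, i < m → c q m i = 0 := by
    intro q m i hlt
    simp only [hcdef]
    rw [if_neg]
    intro h
    exact absurd (h.le.trans (min_le_right (k q) i)) (not_le.mpr hlt)
  set B : Fin n → Fin n → ℝ := fun m i => ∑ q, Z.wt q * c q m i with hBdef
  have hBnn : ∀ m i, 0 ≤ B m i := by
    intro m i
    simp only [hBdef]
    exact Finset.sum_nonneg fun q _ => mul_nonneg (Z.wt_nonneg q) (hcnn q m i)
  have hBsum : ∀ i, ∑ m, B m i = f i := by
    intro i
    simp only [hBdef]
    rw [Finset.sum_comm, ← Z.bayes i]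
    refine Finset.sum_congr rfl fun q _ => ?_
    rw [← Finset.mul_sum, hcsum]
  have hBzero : ∀ m i, i < m → B m i = 0 := by
    intro m i hlt
    simp only [hBdef]
    refine Finset.sum_eq_zero fun q _ => ?_
    rw [hczero q m i hlt, mul_zero]
  set γ : Fin n → ℝ := fun m => ∑ i, B m i with hγdef
  have hγapp : ∀ m, γ m = ∑ i, B m i := fun m => by rw [hγdef]
  have hγnn : ∀ m, 0 ≤ γ m := by
    intro m
    rw [hγapp]
    exact Finset.sum_nonneg fun i _ => hBnn m i
  have hγsum : ∑ m, γ m = 1 := by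
    simp only [hγdef]
    rw [Finset.sum_comm]
    simp [hBsum, hsum]
  have hBleγ : ∀ m i, B m i ≤ γ m := by
    intro m i
    rw [hγapp]
    exact Finset.single_le_sum (fun j _ => hBnn m j) (Finset.mem_univ i)
  have hBzeroγ : ∀ m i, γ m = 0 → B m i = 0 :=
    fun m i h => le_antisymm (h ▸ hBleγ m i) (hBnn m i)
  -- key inequality: each bucket signal is efficient with minimum m
  have hkey : ∀ q m l, v l * (∑ j ∈ Finset.univ.filter (fun j => l ≤ j), c q m j)
      ≤ v m * (∑ j, c q m j) := by
    intro q m l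
    rcases lt_trichotomy m (k q) with hm | hm | hm
    · have hc' : ∀ j, c q m j = if j = m then Z.sig q m else 0 := by
        intro j
        simp only [hcdef]
        by_cases hj : j = m
        · subst hj
          rw [if_pos rfl, if_pos (min_eq_right (le_of_lt hm)).symm]
        · rw [if_neg hj, if_neg]
          intro h
          rcases min_cases (k q) j with ⟨h2, _⟩ | ⟨h2, _⟩
          · exact absurd (h.trans h2) (ne_of_lt hm)
          · exact hj (h2 ▸ h).symm
      simp only [hc']
      rw [Finset.sum_ite_eq' Finset.univ m (fun _ => Z.sig q m),
        Finset.sum_ite_eq' (Finset.univ.filter (fun j => l ≤ j)) m (fun _ => Z.sig q m)]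
      simp only [Finset.mem_filter, Finset.mem_univ, true_and, if_true]
      by_cases hl : l ≤ m
      · rw [if_pos hl]
        exact mul_le_mul_of_nonneg_right ((hv.le_iff_le).mpr hl) (hsnn q m)
      · rw [if_neg hl, mul_zero]
        exact mul_nonneg (le_of_lt (hvpos m)) (hsnn q m)
    · have hc' : ∀ j, c q m j = if m ≤ j then Z.sig q j else 0 := by
        intro j
        simp only [hcdef, ← hm]
        by_cases hj : m ≤ j
        · rw [if_pos hj, if_pos (min_eq_left hj).symm]
        · rw [if_neg hj, if_neg]
          intro h
          rcases min_cases m j with ⟨_, h3⟩ | ⟨h2, _⟩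
          · exact hj h3
          · exact hj (le_of_eq (h.trans h2))
      simp only [hc']
      rw [← Finset.sum_filter, ← Finset.sum_filter, Finset.filter_filter]
      rcases le_or_gt l m with hl | hl
      · have hff : Finset.univ.filter (fun a => l ≤ a ∧ m ≤ a)
            = Finset.univ.filter (fun j => m ≤ j) := by
          ext j
          simp only [Finset.mem_filter, Finset.mem_univ, true_and, and_iff_right_iff_imp]
          exact fun h => hl.trans h
        rw [hff]
        exact mul_le_mul_of_nonneg_right ((hv.le_iff_le).mpr hl)
          (Finset.sum_nonneg fun j _ => hsnn q j)
      · have hff : Finset.univ.filter (fun a => l ≤ a ∧ m ≤ a)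
            = Finset.univ.filter (fun j => l ≤ j) := by
          ext j
          simp only [Finset.mem_filter, Finset.mem_univ, true_and, and_iff_left_iff_imp]
          exact fun h => (le_of_lt hl).trans h
        rw [hff, ← G_eq_idx v (Z.sig q) hv l, ← G_eq_idx v (Z.sig q) hv m, hm]
        exact hknn q l
    · have hc' : ∀ j, c q m j = 0 := by
        intro j
        simp only [hcdef]
        rw [if_neg]
        intro h
        exact absurd (h.le.trans (min_le_left (k q) j)) (not_le.mpr hm)
      simp [hc']
  have hkeyB : ∀ m l, v l * (∑ j ∈ Finset.univ.filter (fun j => l ≤ j), B m j)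
      ≤ v m * γ m := by
    intro m l
    have h1 : ∑ j ∈ Finset.univ.filter (fun j => l ≤ j), B m j
        = ∑ q, Z.wt q * ∑ j ∈ Finset.univ.filter (fun j => l ≤ j), c q m j := by
      simp only [hBdef]
      rw [Finset.sum_comm]
      exact Finset.sum_congr rfl fun q _ => (Finset.mul_sum _ _ _).symm
    have h2 : γ m = ∑ q, Z.wt q * ∑ j, c q m j := by
      simp only [hγdef, hBdef]
      rw [Finset.sum_comm]
      exact Finset.sum_congr rfl fun q _ => (Finset.mul_sum _ _ _).symm
    rw [h1, h2, Finset.mul_sum, Finset.mul_sum]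
    refine Finset.sum_le_sum fun q _ => ?_
    rw [mul_left_comm, mul_left_comm (v m)]
    exact mul_le_mul_of_nonneg_left (hkey q m l) (Z.wt_nonneg q)
  have hBmm : ∀ m, 0 < γ m → 0 < B m m := by
    intro m hγm
    have hne : ∑ i, B m i ≠ 0 := by
      rw [← hγapp]
      exact hγm.ne'
    obtain ⟨i, _, hBi0⟩ := Finset.exists_ne_zero_of_sum_ne_zero hne
    have hBi : 0 < B m i := lt_of_le_of_ne (hBnn m i) (Ne.symm hBi0)
    have hne2 : ∑ q, Z.wt q * c q m i ≠ 0 := by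
      have := hBi.ne'
      simp only [hBdef] at this
      exact this
    obtain ⟨q, _, hq0⟩ := Finset.exists_ne_zero_of_sum_ne_zero hne2
    have hwq : 0 < Z.wt q := by
      rcases eq_or_lt_of_le (Z.wt_nonneg q) with h | h
      · exact absurd (by rw [← h, zero_mul]) hq0
      · exact h
    have hcq : c q m i ≠ 0 := fun h => hq0 (by rw [h, mul_zero])
    have hmmin : m = min (k q) i := by
      by_contra h
      exact hcq (by simp only [hcdef]; rw [if_neg h])
    have hmk : m ≤ k q := hmmin.le.trans (min_le_left _ _)
    have hsig_i : Z.sig q i ≠ 0 := by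
      have hci : c q m i = Z.sig q i := by
        simp only [hcdef]
        rw [if_pos hmmin]
      rwa [hci] at hcq
    have hsigm : 0 < Z.sig q m := by
      rcases min_cases (k q) i with ⟨h2, _⟩ | ⟨h2, _⟩
      · rw [show m = k q from hmmin.trans h2]
        exact hkpos q
      · rw [show m = i from hmmin.trans h2]
        exact lt_of_le_of_ne (hsnn q i) (Ne.symm hsig_i)
    have hcm : c q m m = Z.sig q m := by
      simp only [hcdef]
      rw [if_pos (min_eq_right hmk).symm]
    calc (0:ℝ) < Z.wt q * c q m m := by rw [hcm]; exact mul_pos hwq hsigm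
      _ ≤ B m m := by
        simp only [hBdef]
        exact Finset.single_le_sum
          (fun r _ => mul_nonneg (Z.wt_nonneg r) (hcnn r m m)) (Finset.mem_univ q)
  -- the efficient signals
  set sigE : Fin n → Fin n → ℝ := fun m i =>
    if γ m = 0 then (if i = m then 1 else 0) else B m i / γ m with hsEdef
  have hsEapp : ∀ m i, γ m ≠ 0 → sigE m i = B m i / γ m := by
    intro m i h
    simp only [hsEdef]
    rw [if_neg h]
  have hsigE_isSignal : ∀ m, IsSignal (sigE m) := by
    intro m
    by_cases hγm : γ m = 0
    · constructor
      · intro i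
        simp only [hsEdef, if_pos hγm]
        split <;> norm_num
      · simp only [hsEdef, if_pos hγm]
        rw [Finset.sum_ite_eq' Finset.univ m (fun _ => (1:ℝ))]
        simp
    · constructor
      · intro i
        rw [hsEapp m i hγm]
        exact div_nonneg (hBnn m i) (hγnn m)
      · rw [Finset.sum_congr rfl fun i _ => hsEapp m i hγm, ← Finset.sum_div, ← hγapp]
        exact div_self hγm
  have hγsig : ∀ m i, γ m * sigE m i = B m i := by
    intro m i
    by_cases hγm : γ m = 0
    · rw [hγm, zero_mul, hBzeroγ m i hγm]
    · rw [hsEapp m i hγm, mul_comm]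
      exact div_mul_cancel₀ _ hγm
  have hsigEpos : ∀ m i, 0 < γ m → (0 < sigE m i ↔ 0 < B m i) := by
    intro m i hγm
    rw [hsEapp m i hγm.ne']
    constructor
    · intro h
      by_contra hb
      rw [le_antisymm (not_lt.mp hb) (hBnn m i), zero_div] at h
      exact lt_irrefl 0 h
    · intro h
      exact div_pos h hγm
  have hGEone : ∀ m, 0 < γ m → ∀ l, l ≤ m → G v (sigE m) l = 1 := by
    intro m hγm l hl
    rw [G_eq_idx v (sigE m) hv]
    have hsupp : ∀ j ∈ Finset.univ, sigE m j ≠ 0 → l ≤ j := by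
      intro j _ hj
      rw [hsEapp m j hγm.ne'] at hj
      have hBj : B m j ≠ 0 := fun h => hj (by rw [h, zero_div])
      have hmj : m ≤ j := by
        by_contra h
        exact hBj (hBzero m j (not_le.mp h))
      exact hl.trans hmj
    rw [Finset.sum_filter_of_ne hsupp]
    exact (hsigE_isSignal m).2
  have hGE : ∀ m, 0 < γ m → ∀ l,
      G v (sigE m) l = (∑ j ∈ Finset.univ.filter (fun j => l ≤ j), B m j) / γ m := by
    intro m hγm l
    rw [G_eq_idx v (sigE m) hv, Finset.sum_div]
    exact Finset.sum_congr rfl fun j _ => hsEapp m j hγm.ne'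
  have hmaxE : ∀ m, 0 < γ m → ∀ l,
      v l * G v (sigE m) l ≤ v m * G v (sigE m) m := by
    intro m hγm l
    rw [hGEone m hγm m (le_refl m), mul_one, hGE m hγm l, ← mul_div_assoc,
      div_le_iff₀ hγm]
    exact hkeyB m l
  have hstrictE : ∀ m, 0 < γ m → ∀ l, l < m →
      v l * G v (sigE m) l < v m * G v (sigE m) m := by
    intro m hγm l hl
    rw [hGEone m hγm m (le_refl m), hGEone m hγm l (le_of_lt hl), mul_one, mul_one]
    exact hv hl
  have hpriceE : ∀ m, 0 < γ m → priceIdx v (sigE m) = m :=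
    fun m hγm => priceIdx_eq v (sigE m) m (hmaxE m hγm) (fun l hl => hstrictE m hγm l hl)
  have hminsuppE : ∀ m, 0 < γ m → ∀ i, MinSupp (sigE m) i → i = m := by
    intro m hγm i hi
    obtain ⟨h1, h2⟩ := hi
    have him : m ≤ i := by
      have hB : 0 < B m i := (hsigEpos m i hγm).mp h1
      by_contra h
      rw [hBzero m i (not_le.mp h)] at hB
      exact lt_irrefl 0 hB
    have hmi : i ≤ m := h2 m ((hsigEpos m m hγm).mpr (hBmm m hγm))
    exact le_antisymm hmi him
  refine ⟨⟨n, sigE, γ, hsigE_isSignal, hγnn, hγsum, ?_⟩, ?_, ?_, ?_, ?_⟩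
  · -- bayes
    intro i
    rw [← hBsum i]
    exact Finset.sum_congr rfl fun m _ => hγsig m i
  · -- efficient
    intro q hq i hi j
    have hiq : i = q := hminsuppE q hq i hi
    subst hiq
    exact hmaxE i hq j
  · -- consumer surplus preserved
    intro i
    show ∑ m : Fin n, cs v (sigE m) i * (γ m * sigE m i / f i) = csZ v f Z i
    have hterm : ∀ m : Fin n, cs v (sigE m) i * (γ m * sigE m i / f i)
        = (if m ≤ i then v i - v m else 0) * (B m i / f i) := by
      intro m
      by_cases hγm : γ m = 0
      · rw [hBzeroγ m i hγm, hγm]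
        simp
      · have hγm' : 0 < γ m := lt_of_le_of_ne (hγnn m) (Ne.symm hγm)
        have hcs : cs v (sigE m) i = if m ≤ i then v i - v m else 0 := by
          unfold cs
          rw [hpriceE m hγm']
          by_cases h : m ≤ i
          · rw [if_pos ((hv.le_iff_le).mpr h), if_pos h]
          · rw [if_neg (fun hc => h ((hv.le_iff_le).mp hc)), if_neg h]
        rw [hcs, hγsig m i]
    rw [Finset.sum_congr rfl fun m _ => hterm m]
    have hL : ∑ m, (if m ≤ i then v i - v m else 0) * (B m i / f i)
        = ∑ q, ∑ m, (if m ≤ i then v i - v m else 0) * (Z.wt q * c q m i / f i) := by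
      rw [Finset.sum_comm]
      refine Finset.sum_congr rfl fun m _ => ?_
      simp only [hBdef]
      rw [Finset.sum_div, Finset.mul_sum]
    rw [hL]
    unfold csZ
    refine Finset.sum_congr rfl fun q _ => ?_
    have hsplit : ∀ m : Fin n, (if m ≤ i then v i - v m else 0) * (Z.wt q * c q m i / f i)
        = if m = min (k q) i then
            (if m ≤ i then v i - v m else 0) * (Z.wt q * Z.sig q i / f i) else 0 := by
      intro m
      simp only [hcdef]
      by_cases hm : m = min (k q) i
      · rw [if_pos hm, if_pos hm]
      · rw [if_neg hm, if_neg hm]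
        simp
    rw [Finset.sum_congr rfl fun m _ => hsplit m,
      Finset.sum_ite_eq' Finset.univ (min (k q) i)
        (fun m => (if m ≤ i then v i - v m else 0) * (Z.wt q * Z.sig q i / f i))]
    simp only [Finset.mem_univ, if_true]
    rw [if_pos (min_le_right (k q) i), hcsq q i]
    rcases le_or_gt (k q) i with h | h
    · rw [min_eq_left h, if_pos ((hv.le_iff_le).mpr h)]
    · rw [min_eq_right (le_of_lt h),
        if_neg (fun hc => absurd ((hv.le_iff_le).mp hc) (not_le.mpr h)), sub_self]
  · -- at most n signals
    exact le_trans (Finset.card_filter_le _ _) (by simp)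
  · -- distinct minimum supports
    intro q q' hq hq' hne i h1 h2
    exact hne ((hminsuppE q hq i h1).symm.trans (hminsuppE q' hq' i h2))

end PD
end

section
/- Suppose n = 2, i.e., the prior is supported on two values 0 < v₁ < v₂. Then there exists a signaling scheme Z that is 1-majorized (exactly majorized): for every signaling scheme Z' and every m ∈ (0,1], PF(s_Z, m) ≥ PF(s_{Z'}, m). -/
open Finset MeasureTheory

namespace PD

/-!
With two values the seller never prices below `v 0`, so value `v 0` gets no surplus and the
surplus-mass function of a scheme is `0` on `(0, f 0]` and `csZ 1` on `(f 0, 1]`. Since `PF` is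
monotone in its argument, a scheme maximizing `csZ 1` majorizes every other scheme.

On a signal `S`, value `v 1` gets surplus `v 1 - v 0` exactly when the seller prices at `v 0`, i.e.
when `v 1 * S 1 ≤ v 0`, and that price condition reads `(v 1 - v 0) * S 1 ≤ v 0 * S 0`. Averaging over
the signals gives `f 1 * csZ 1 ≤ min ((v 1 - v 0) * f 1) (v 0 * f 0)`. The bound is attained by
splitting the prior into a signal `(1 - t, t)` with `t = min (f 1) (v 0 / v 1)`, priced at `v 0`,
and a point mass on `v 1`.
-/

section General

variable {n : ℕ} [NeZero n] (v f : Fin n → ℝ)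

lemma le_priceIdx_mul_G (fS : Fin n → ℝ) (j : Fin n) :
    v j * G v fS j ≤ v (priceIdx v fS) * G v fS (priceIdx v fS) := by
  have h : priceIdx v fS ∈ Finset.univ.filter
      (fun i => ∀ j, v j * G v fS j ≤ v i * G v fS i) := by
    unfold priceIdx
    exact Finset.min'_mem _ _
  exact (Finset.mem_filter.mp h).2 j

lemma priceIdx_le {fS : Fin n → ℝ} {i : Fin n}
    (hi : ∀ j, v j * G v fS j ≤ v i * G v fS i) : priceIdx v fS ≤ i :=
  Finset.min'_le _ _ (Finset.mem_filter.mpr ⟨Finset.mem_univ _, hi⟩)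

lemma cs_zero {v : Fin n → ℝ} (hv : Monotone v) (fS : Fin n → ℝ) : cs v fS 0 = 0 := by
  have : v 0 ≤ v (priceIdx v fS) := hv (Fin.zero_le _)
  unfold cs
  split_ifs <;> linarith

lemma csZ_zero {v : Fin n → ℝ} (hv : Monotone v) (Z : Scheme n f) : csZ v f Z 0 = 0 :=
  Finset.sum_eq_zero fun q _ => by rw [cs_zero hv, zero_mul]

lemma cs_nonneg (fS : Fin n → ℝ) (i : Fin n) : 0 ≤ cs v fS i := by
  unfold cs
  split_ifs <;> linarith

lemma csZ_nonneg {f : Fin n → ℝ} (hf : ∀ i, 0 ≤ f i) (Z : Scheme n f) (i : Fin n) :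
    0 ≤ csZ v f Z i :=
  Finset.sum_nonneg fun q _ => mul_nonneg (cs_nonneg v _ i)
    (div_nonneg (mul_nonneg (Z.wt_nonneg q) ((Z.sig_isSignal q).1 i)) (hf i))

lemma mul_csZ {f : Fin n → ℝ} (Z : Scheme n f) {i : Fin n} (hfi : f i ≠ 0) :
    f i * csZ v f Z i = ∑ q, Z.wt q * (cs v (Z.sig q) i * Z.sig q i) := by
  rw [csZ, Finset.mul_sum]
  refine Finset.sum_congr rfl fun q _ => ?_
  field_simp

lemma mul_csZ_le {f : Fin n → ℝ} (Z : Scheme n f) {i : Fin n} (hfi : f i ≠ 0) (j : Fin n)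
    (c : ℝ) (h : ∀ fS, IsSignal fS → cs v fS i * fS i ≤ c * fS j) :
    f i * csZ v f Z i ≤ c * f j := by
  rw [mul_csZ v Z hfi, ← Z.bayes j, Finset.mul_sum]
  exact Finset.sum_le_sum fun q _ =>
    (mul_le_mul_of_nonneg_left (h _ (Z.sig_isSignal q)) (Z.wt_nonneg q)).trans_eq
      (mul_left_comm _ _ _)

lemma smf_nonneg {f : Fin n → ℝ} (hf : ∀ i, 0 ≤ f i) (Z : Scheme n f) (x : ℝ) :
    0 ≤ smf v f Z x :=
  Finset.sum_nonneg fun i _ => by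
    split_ifs
    exacts [csZ_nonneg v hf Z i, le_rfl]

lemma smf_mono {Z Z' : Scheme n f} (h : ∀ i, csZ v f Z' i ≤ csZ v f Z i) (x : ℝ) :
    smf v f Z' x ≤ smf v f Z x :=
  Finset.sum_le_sum fun i _ => by
    split_ifs
    exacts [h i, le_rfl]

lemma integrable_smf (Z : Scheme n f) : Integrable (smf v f Z) := by
  have : smf v f Z = fun x => ∑ i, (Set.Ioc (∑ j ∈ Finset.univ.filter (fun j => j < i), f j)
      (∑ j ∈ Finset.univ.filter (fun j => j ≤ i), f j)).indicator (fun _ => csZ v f Z i) x := by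
    funext x
    simp only [smf, Set.indicator_apply, Set.mem_Ioc]
  rw [this]
  exact integrable_finsetSum _ fun i _ =>
    (integrableOn_const measure_Ioc_lt_top.ne).integrable_indicator measurableSet_Ioc

end General

lemma PF_mono {g g' : ℝ → ℝ} (hg' : ∀ x, 0 ≤ g' x) (hle : ∀ x, g' x ≤ g x)
    (hgi : Integrable g) (hgi' : Integrable g') {m : ℝ} (hm : m ≤ 1) : PF g' m ≤ PF g m := by
  have hbdd : BddBelow {r : ℝ | ∃ T : Set ℝ, T ⊆ Set.Ioc 0 1 ∧ MeasurableSet T ∧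
      volume T = ENNReal.ofReal m ∧ r = ∫ x in T, g' x} :=
    ⟨0, by
      rintro r ⟨T, -, hT, -, rfl⟩
      exact setIntegral_nonneg hT fun x _ => hg' x⟩
  refine le_csInf ⟨_, Set.Ioc 0 m, Set.Ioc_subset_Ioc_right hm, measurableSet_Ioc,
    by rw [Real.volume_Ioc, sub_zero], rfl⟩ ?_
  rintro r ⟨T, hT1, hT, hTm, rfl⟩
  exact (csInf_le hbdd ⟨T, hT1, hT, hTm, rfl⟩).trans
    (setIntegral_mono hgi'.integrableOn hgi.integrableOn hle)

section TwoValues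

variable {v : Fin 2 → ℝ} (h01 : v 0 < v 1)
include h01

lemma G_zero (fS : Fin 2 → ℝ) : G v fS 0 = fS 0 + fS 1 := by
  simp [G, Finset.sum_filter, Fin.sum_univ_two, h01.le]

lemma G_one (fS : Fin 2 → ℝ) : G v fS 1 = fS 1 := by
  simp [G, Finset.sum_filter, Fin.sum_univ_two, not_le.mpr h01]

lemma priceIdx_eq_zero_iff {fS : Fin 2 → ℝ} (hS : IsSignal fS) :
    priceIdx v fS = 0 ↔ v 1 * fS 1 ≤ v 0 := by
  have hG : (∀ j, v j * G v fS j ≤ v 0 * G v fS 0) ↔ v 1 * fS 1 ≤ v 0 := by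
    rw [Fin.forall_fin_two, G_zero h01, G_one h01, ← Fin.sum_univ_two, hS.2, mul_one]
    exact and_iff_right le_rfl
  refine ⟨fun h => hG.mp (h ▸ le_priceIdx_mul_G v fS), fun h => ?_⟩
  exact nonpos_iff_eq_zero.mp (priceIdx_le v (hG.mpr h))

lemma cs_one {fS : Fin 2 → ℝ} (hS : IsSignal fS) :
    cs v fS 1 = if v 1 * fS 1 ≤ v 0 then v 1 - v 0 else 0 := by
  by_cases h : v 1 * fS 1 ≤ v 0
  · simp [cs, (priceIdx_eq_zero_iff h01 hS).mpr h, h, h01.le]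
  · have hp : priceIdx v fS = 1 := by
      rcases Fin.exists_fin_two.mp ⟨priceIdx v fS, rfl⟩ with hp | hp
      · exact absurd ((priceIdx_eq_zero_iff h01 hS).mp hp) h
      · exact hp
    simp [cs, hp, h]

lemma cs_one_mul_le_sub_mul {fS : Fin 2 → ℝ} (hS : IsSignal fS) :
    cs v fS 1 * fS 1 ≤ (v 1 - v 0) * fS 1 := by
  rw [cs_one h01 hS]
  split_ifs
  · exact le_rfl
  · rw [zero_mul]
    exact mul_nonneg (sub_nonneg.mpr h01.le) (hS.1 1)

/-- The seller prices at `v 0` only if `v 1 * fS 1 ≤ v 0 * (fS 0 + fS 1)`. -/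
lemma cs_one_mul_le_mul_zero (hv0 : 0 ≤ v 0) {fS : Fin 2 → ℝ} (hS : IsSignal fS) :
    cs v fS 1 * fS 1 ≤ v 0 * fS 0 := by
  have hsum : fS 0 + fS 1 = 1 := by rw [← Fin.sum_univ_two, hS.2]
  rw [cs_one h01 hS]
  split_ifs with h
  · nlinarith
  · rw [zero_mul]
    exact mul_nonneg hv0 (hS.1 0)

lemma exists_scheme_mul_csZ_one_eq_of_le {f : Fin 2 → ℝ} (hf : ∀ i, 0 < f i)
    (hsum : f 0 + f 1 = 1) {t : ℝ} (ht0 : 0 ≤ t) (htf : t ≤ f 1) (htv : v 1 * t ≤ v 0) :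
    ∃ Z : Scheme 2 f, f 1 * csZ v f Z 1 = f 0 / (1 - t) * ((v 1 - v 0) * t) := by
  have ht1 : 0 < 1 - t := by linarith [hf 0]
  set γ := f 0 / (1 - t)
  have hγt : γ * (1 - t) = f 0 := div_mul_cancel₀ _ ht1.ne'
  have hA : IsSignal ![1 - t, t] :=
    ⟨Fin.forall_fin_two.mpr ⟨by simpa using ht1.le, by simpa using ht0⟩, by simp⟩
  have hB : IsSignal ![(0 : ℝ), 1] := ⟨Fin.forall_fin_two.mpr ⟨by simp, by simp⟩, by simp⟩
  refine ⟨⟨2, ![![1 - t, t], ![0, 1]], ![γ, 1 - γ], Fin.forall_fin_two.mpr ⟨hA, hB⟩,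
    Fin.forall_fin_two.mpr ⟨div_nonneg (hf 0).le ht1.le, ?_⟩, by simp,
    Fin.forall_fin_two.mpr ⟨?_, ?_⟩⟩, ?_⟩
  · simpa using (div_le_one ht1).mpr (by linarith)
  · simpa using hγt
  · simp only [Fin.sum_univ_two, Matrix.cons_val_zero, Matrix.cons_val_one,
      Matrix.cons_val_fin_one, mul_one]
    linarith
  · rw [mul_csZ v _ (hf 1).ne', Fin.sum_univ_two]
    simp only [Matrix.cons_val_zero, Matrix.cons_val_one]
    rw [cs_one h01 hA, cs_one h01 hB]
    simp [htv, not_le.mpr h01]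

end TwoValues

lemma div_one_sub_min_mul_eq_min {a b p q : ℝ} (ha : 0 < a) (hab : a < b) (hp : 0 < p)
    (hpq : p + q = 1) :
    p / (1 - min q (a / b)) * ((b - a) * min q (a / b)) = min ((b - a) * q) (a * p) := by
  have hb : 0 < b := ha.trans hab
  rcases min_cases q (a / b) with ⟨hmin, hqab⟩ | ⟨hmin, hqab⟩ <;> rw [hmin]
  · rw [show 1 - q = p by linarith, div_self hp.ne', one_mul, min_eq_left]
    have := (le_div_iff₀ hb).mp hqab
    nlinarith
  · have := (div_lt_iff₀ hb).mp hqab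
    rw [min_eq_right (by nlinarith)]
    field_simp [(sub_pos.mpr hab).ne']

lemma exists_scheme_mul_csZ_one_eq {v f : Fin 2 → ℝ} (h01 : v 0 < v 1) (hv0 : 0 < v 0)
    (hf : ∀ i, 0 < f i) (hsum : f 0 + f 1 = 1) :
    ∃ Z : Scheme 2 f, f 1 * csZ v f Z 1 = min ((v 1 - v 0) * f 1) (v 0 * f 0) := by
  have hv1 : 0 < v 1 := hv0.trans h01
  obtain ⟨Z, hZ⟩ := exists_scheme_mul_csZ_one_eq_of_le h01 hf hsum
    (le_min (hf 1).le (div_pos hv0 hv1).le) (min_le_left _ _)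
    (by nlinarith [(le_div_iff₀ hv1).mp (min_le_right (f 1) (v 0 / v 1))])
  exact ⟨Z, hZ.trans (div_one_sub_min_mul_eq_min hv0 h01 (hf 0) hsum)⟩

theorem stmt19 (v f : Fin 2 → ℝ)
    (hv : StrictMono v) (hvpos : ∀ i, 0 < v i)
    (hf : ∀ i, 0 < f i) (hsum : ∑ i, f i = 1) :
    ∃ Z : Scheme 2 f, ∀ Z' : Scheme 2 f, ∀ m : ℝ, 0 < m → m ≤ 1 →
      PF (smf v f Z') m ≤ PF (smf v f Z) m := by
  have h01 : v 0 < v 1 := hv Fin.zero_lt_one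
  obtain ⟨Z, hZ⟩ := exists_scheme_mul_csZ_one_eq h01 (hvpos 0) hf
    (by rwa [Fin.sum_univ_two] at hsum)
  refine ⟨Z, fun Z' m _ hm => ?_⟩
  have hcs : ∀ i, csZ v f Z' i ≤ csZ v f Z i := by
    refine Fin.forall_fin_two.mpr ⟨by rw [csZ_zero f hv.monotone, csZ_zero f hv.monotone], ?_⟩
    refine le_of_mul_le_mul_left (hZ ▸ le_min ?_ ?_) (hf 1)
    · exact mul_csZ_le v Z' (hf 1).ne' 1 _ fun _ => cs_one_mul_le_sub_mul h01
    · exact mul_csZ_le v Z' (hf 1).ne' 0 _ fun _ => cs_one_mul_le_mul_zero h01 (hvpos 0).le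
  exact PF_mono (smf_nonneg v (fun i => (hf i).le) Z') (smf_mono v f hcs)
    (integrable_smf v f Z) (integrable_smf v f Z') hm

end PD
end
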